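/- arXiv:1307.4277 — 2 statements merged into one kernel-verified Lean document; each statement's English description precedes it below -/
import Mathlib

section
/- Let d : ℝ → ℝ be an additive function such that the mapping φ defined on (0, ∞) by φ(x) = d(ln(x)) − (1/x)·d(x) is regular on (0, ∞) (i.e., locally bounded, or continuous, or Lebesgue measurable). Then there exists a real derivation χ : ℝ → ℝ such that d(x) = χ(x) + d(1)·x for all x ∈ ℝ. -/
open Real Set

/-- A function `φ` is locally bounded on a set `s` if every point of `s` has a
neighborhood (within `s`) on which `φ` is bounded. -/
def LocallyBoundedOn (φ : ℝ → ℝ) (s : Set ℝ) : Prop :=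
  ∀ x ∈ s, ∃ C : ℝ, ∀ᶠ y in nhdsWithin x s, |φ y| ≤ C

/-- A real-valued function is *regular* on its domain `s` if it is locally bounded,
or continuous, or Lebesgue measurable on `s`. -/
def RegularOn (φ : ℝ → ℝ) (s : Set ℝ) : Prop :=
  LocallyBoundedOn φ s ∨ ContinuousOn φ s ∨ Measurable (s.restrict φ)

/-- A real derivation: an additive function satisfying the Leibniz rule. -/
def IsRealDerivation (χ : ℝ → ℝ) : Prop :=
  (∀ x y : ℝ, χ (x + y) = χ x + χ y) ∧ (∀ x y : ℝ, χ (x * y) = x * χ y + y * χ x)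


open MeasureTheory Filter Metric Bornology Topology

/-! Put `c = d 1`, `χ = d - c • id` and `φ x = d (log x) - d x / x`. Since
`log (x * y) = log x + log y`, the Leibniz defect `χ (x * y) - x * χ y - y * χ x` equals
`x * y * (φ x + φ y + c - φ (x * y))` for `x, y > 0`. For fixed `y` it is additive in `x`, and
regularity of `φ` bounds it on a set of positive measure. By Steinhaus' theorem an additive
function bounded on such a set is continuous, hence linear; as the defect vanishes at `x = 1`, it
vanishes identically. Negative `y` follow from symmetry and oddness of the defect. -/

theorem AddMonoidHom.continuous_of_isBounded_image_of_measure_pos {G H : Type*}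
    [NormedAddCommGroup G] [MeasurableSpace G] [BorelSpace G] [LocallyCompactSpace G]
    [SeminormedAddCommGroup H] [NormedSpace ℝ H] (μ : Measure G) [μ.IsAddHaarMeasure]
    [μ.InnerRegular] (f : G →+ H) {E : Set G} (hE : MeasurableSet E) (hμE : 0 < μ E)
    (hf : IsBounded (f '' E)) : Continuous f :=
  f.continuous_of_isBounded_nhds_zero (Measure.sub_mem_nhds_zero_of_addHaar_pos μ E hE hμE)
    (by rw [Set.image_sub]; exact hf.sub hf)

theorem ContinuousOn.locallyBoundedOn {φ : ℝ → ℝ} {s : Set ℝ} (h : ContinuousOn φ s) :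
    LocallyBoundedOn φ s := fun x hx =>
  ⟨|φ x| + 1, ((h x hx).abs.eventually (gt_mem_nhds (lt_add_one _))).mono fun _ => le_of_lt⟩

theorem exists_measure_inter_le_pos {α : Type*} [MeasurableSpace α] {μ : Measure α}
    (g : α → ℝ) {U : Set α} (hU : 0 < μ U) :
    ∃ n : ℕ, 0 < μ (U ∩ {x | g x ≤ n}) := by
  refine exists_measure_pos_of_not_measure_iUnion_null (hU.trans_le (measure_mono ?_)).ne'
  intro x hx
  obtain ⟨n, hn⟩ := exists_nat_ge (g x)
  exact mem_iUnion.2 ⟨n, hx, hn⟩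

section Leibniz

variable {R : Type*} [CommRing R]

def leibnizDefect (χ : R → R) (x y : R) : R :=
  χ (x * y) - x * χ y - y * χ x

theorem leibnizDefect_comm (χ : R → R) (x y : R) :
    leibnizDefect χ x y = leibnizDefect χ y x := by
  simp only [leibnizDefect, mul_comm x y]
  ring

def leibnizDefectHom (χ : R →+ R) (y : R) : R →+ R :=
  AddMonoidHom.mk' (leibnizDefect χ · y) fun x x' => by
    simp only [leibnizDefect, add_mul, map_add]
    ring

@[simp]
theorem leibnizDefectHom_apply (χ : R →+ R) (x y : R) :
    leibnizDefectHom χ y x = leibnizDefect χ x y :=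
  rfl

end Leibniz

theorem leibnizDefect_eq_zero_of_continuous (χ : ℝ →+ ℝ) (hχ : χ 1 = 0) (x y : ℝ)
    (h : Continuous (leibnizDefectHom χ y)) : leibnizDefect χ x y = 0 := by
  simpa [leibnizDefect, hχ] using map_real_smul _ h x 1

theorem isRealDerivation_of_leibnizDefect_eq_zero_of_pos (χ : ℝ →+ ℝ)
    (h : ∀ x y, 0 < y → leibnizDefect χ x y = 0) : IsRealDerivation χ := by
  refine ⟨map_add χ, fun x y => ?_⟩
  have hxy : leibnizDefect χ x y = 0 := by
    rcases lt_trichotomy y 0 with hy | rfl | hy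
    · rw [leibnizDefect_comm, ← neg_neg y, ← leibnizDefectHom_apply, map_neg,
        leibnizDefectHom_apply, leibnizDefect_comm, h x (-y) (neg_pos.2 hy), neg_zero]
    · simp [leibnizDefect]
    · exact h x y hy
  rw [leibnizDefect] at hxy
  linear_combination hxy

noncomputable def logDefect (d : ℝ → ℝ) (x : ℝ) : ℝ :=
  d (log x) - (1 / x) * d x

theorem leibnizDefect_sub_mulLeft_eq_mul_logDefect (D : ℝ →+ ℝ) {x y : ℝ} (hx : 0 < x)
    (hy : 0 < y) :
    leibnizDefect (D - AddMonoidHom.mulLeft (D 1)) x y =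
      x * y * (logDefect D x + logDefect D y + D 1 - logDefect D (x * y)) := by
  simp only [leibnizDefect, logDefect, AddMonoidHom.sub_apply, AddMonoidHom.coe_mulLeft,
    Real.log_mul hx.ne' hy.ne', map_add]
  field_simp
  ring

theorem leibnizDefect_eq_zero_of_bounded (D : ℝ →+ ℝ) {y : ℝ} (hy : 0 < y) {E : Set ℝ}
    (hE02 : E ⊆ Ioo 0 2) (hE : MeasurableSet E) (hμE : 0 < volume E) {C : ℝ}
    (hC : ∀ x ∈ E, |logDefect D x| + |logDefect D (x * y)| ≤ C) (x : ℝ) :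
    leibnizDefect (D - AddMonoidHom.mulLeft (D 1)) x y = 0 := by
  refine leibnizDefect_eq_zero_of_continuous _ (by simp) x y ?_
  refine (leibnizDefectHom _ y).continuous_of_isBounded_image_of_measure_pos volume hE hμE ?_
  rw [isBounded_iff_forall_norm_le]
  refine ⟨2 * y * (C + |logDefect D y| + |D 1|), ?_⟩
  rintro _ ⟨x, hx, rfl⟩
  obtain ⟨hx0, hx2⟩ := hE02 hx
  rw [leibnizDefectHom_apply, leibnizDefect_sub_mulLeft_eq_mul_logDefect D hx0 hy,
    Real.norm_eq_abs, abs_mul, abs_of_pos (by positivity)]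
  have hsum : |logDefect D x + logDefect D y + D 1 - logDefect D (x * y)| ≤
      C + |logDefect D y| + |D 1| :=
    calc _ ≤ |logDefect D x| + |logDefect D y| + |D 1| + |logDefect D (x * y)| :=
          (abs_sub _ _).trans (by gcongr; exact abs_add_three _ _ _)
      _ ≤ C + |logDefect D y| + |D 1| := by linarith [hC x hx]
  exact mul_le_mul (by nlinarith) hsum (abs_nonneg _) (by positivity)

theorem LocallyBoundedOn.exists_measure_pos_abs_add_abs_mul_le {φ : ℝ → ℝ}
    (hφ : LocallyBoundedOn φ (Ioi 0)) {y : ℝ} (hy : 0 < y) :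
    ∃ E ⊆ Ioo 0 2, MeasurableSet E ∧ 0 < volume E ∧
      ∃ C, ∀ x ∈ E, |φ x| + |φ (x * y)| ≤ C := by
  obtain ⟨C₁, h₁⟩ := hφ 1 (mem_Ioi.2 one_pos)
  obtain ⟨C₂, h₂⟩ := hφ y hy
  rw [isOpen_Ioi.nhdsWithin_eq (mem_Ioi.2 one_pos)] at h₁
  rw [isOpen_Ioi.nhdsWithin_eq hy] at h₂
  have h₂' : ∀ᶠ x in 𝓝 1, |φ (x * y)| ≤ C₂ :=
    ((continuous_mul_const y).tendsto' 1 y (one_mul y)).eventually h₂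
  have h₀ : ∀ᶠ x in 𝓝 (1 : ℝ), x ∈ Ioo 0 2 := Ioo_mem_nhds one_pos one_lt_two
  obtain ⟨ε, hε, hball⟩ := eventually_nhds_iff_ball.1 (h₀.and (h₁.and h₂'))
  exact ⟨ball 1 ε, fun x hx => (hball x hx).1, measurableSet_ball, measure_ball_pos volume 1 hε,
    C₁ + C₂, fun x hx => add_le_add (hball x hx).2.1 (hball x hx).2.2⟩

theorem exists_measure_pos_abs_add_abs_mul_le_of_measurable_restrict {φ : ℝ → ℝ}
    (hφ : Measurable ((Ioi 0).domRestrict φ)) {y : ℝ} (hy : 0 < y) :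
    ∃ E ⊆ Ioo 0 2, MeasurableSet E ∧ 0 < volume E ∧
      ∃ C, ∀ x ∈ E, |φ x| + |φ (x * y)| ≤ C := by
  obtain ⟨m, hm, hmφ⟩ := (MeasurableEmbedding.subtype_coe measurableSet_Ioi)
    |>.exists_measurable_extend hφ fun _ => ⟨0⟩
  have hm_eq (x : ℝ) (hx : 0 < x) : m x = φ x := congrFun hmφ ⟨x, hx⟩
  set g : ℝ → ℝ := fun x => |m x| + |m (x * y)|
  have hg : Measurable g := by fun_prop
  have hU : 0 < volume (Ioo (1 : ℝ) 2) := by rw [Real.volume_Ioo]; norm_num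
  obtain ⟨n, hn⟩ := exists_measure_inter_le_pos g hU
  refine ⟨Ioo 1 2 ∩ {x | g x ≤ n}, fun x hx => ⟨one_pos.trans hx.1.1, hx.1.2⟩,
    measurableSet_Ioo.inter (measurableSet_le hg measurable_const), hn, n, fun x hx => ?_⟩
  have hx0 : 0 < x := one_pos.trans hx.1.1
  simpa [g, hm_eq x hx0, hm_eq (x * y) (mul_pos hx0 hy)] using hx.2

theorem RegularOn.exists_measure_pos_abs_add_abs_mul_le {φ : ℝ → ℝ}
    (hφ : RegularOn φ (Ioi 0)) {y : ℝ} (hy : 0 < y) :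
    ∃ E ⊆ Ioo 0 2, MeasurableSet E ∧ 0 < volume E ∧
      ∃ C, ∀ x ∈ E, |φ x| + |φ (x * y)| ≤ C := by
  rcases hφ with hb | hc | hm
  · exact hb.exists_measure_pos_abs_add_abs_mul_le hy
  · exact hc.locallyBoundedOn.exists_measure_pos_abs_add_abs_mul_le hy
  · exact exists_measure_pos_abs_add_abs_mul_le_of_measurable_restrict hm hy

theorem stmt_7 (d : ℝ → ℝ)
    (hd : ∀ x y : ℝ, d (x + y) = d x + d y)
    (hreg : RegularOn (fun x : ℝ => d (Real.log x) - (1 / x) * d x) (Set.Ioi 0)) :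
    ∃ χ : ℝ → ℝ, IsRealDerivation χ ∧ ∀ x : ℝ, d x = χ x + d 1 * x := by
  set D : ℝ →+ ℝ := AddMonoidHom.mk' d hd
  refine ⟨⇑(D - AddMonoidHom.mulLeft (D 1)),
    isRealDerivation_of_leibnizDefect_eq_zero_of_pos _ fun x y hy => ?_, fun x => by simp [D]⟩
  obtain ⟨E, hE02, hE, hμE, C, hC⟩ :=
    RegularOn.exists_measure_pos_abs_add_abs_mul_le (φ := logDefect D) hreg hy
  exact leibnizDefect_eq_zero_of_bounded D hy hE02 hE hμE hC x
end

section
/- Let d : ℝ → ℝ be an additive function such that the mapping φ : ℝ → ℝ defined by φ(x) = d(arsinh(x)) − (1/√(x² + 1))·d(x) is regular (i.e., locally bounded, or continuous, or Lebesgue measurable), where arsinh(x) = ln(x + √(x² + 1)) is the inverse of sinh. Then there exists a real derivation χ : ℝ → ℝ such that d(x) = χ(x) + d(1)·x for all x ∈ ℝ. -/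
/-!
Put `ψ y = cosh y * d y - d (sinh y)`; this is `cosh y * φ (sinh y)`, so `ψ` is regular together
with `φ`. Since `sinh (t + s) + sinh (t - s) = 2 sinh t cosh s`, additivity of `d` and the
addition formulas for `cosh` show that, for fixed `s`, the additive function
`u ↦ d (u cosh s) - cosh s * d u - tanh s * d (sinh s) * u` is a combination of values of `ψ`
at continuous functions of `u` with continuous coefficients. It is therefore locally bounded or
measurable, hence continuous, hence linear. This gives the Leibniz rule for
`χ x = d x - d 1 * x` at every `w = cosh s ≥ 1`, and shifting by integers extends it to all `w`.
-/

open Real Set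

open Filter Topology Asymptotics

theorem RegularOn.isBigO_one_or_measurable {φ : ℝ → ℝ} (h : RegularOn φ univ) :
    (∀ x, φ =O[𝓝 x] fun _ => (1 : ℝ)) ∨ Measurable φ := by
  rcases h with hbdd | hcont | hmeas
  · refine .inl fun x => (isBigO_one_iff ℝ).2 ?_
    obtain ⟨C, hC⟩ := hbdd x (mem_univ x)
    exact ⟨C, by simpa only [eventually_map, Real.norm_eq_abs, nhdsWithin_univ] using hC⟩
  · exact .inl fun x => (continuousOn_univ.1 hcont).continuousAt.tendsto.isBigO_one ℝ
  · exact .inr (hmeas.comp (measurable_id.subtype_mk (h := mem_univ)))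

theorem isBigO_one_mul_comp {X : Type*} [TopologicalSpace X] {φ : ℝ → ℝ}
    (hφ : ∀ x, φ =O[𝓝 x] fun _ => (1 : ℝ)) {c σ : X → ℝ} (hc : Continuous c)
    (hσ : Continuous σ) (x : X) : (fun y => c y * φ (σ y)) =O[𝓝 x] fun _ => (1 : ℝ) := by
  simpa using ((hc.tendsto x).isBigO_one ℝ).mul ((hφ (σ x)).comp_tendsto (hσ.tendsto x))

theorem AddMonoidHom.continuous_of_isBigO_one {E : Type*} [SeminormedAddCommGroup E]
    (G : E →+ ℝ) (hG : G =O[𝓝 0] fun _ => (1 : ℝ)) : Continuous G := by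
  obtain ⟨C, hC⟩ := (isBigO_one_iff ℝ).1 hG
  refine G.continuous_of_isBounded_nhds_zero (s := {x | ‖G x‖ ≤ C}) hC ?_
  refine (Metric.isBounded_closedBall (x := 0) (r := C)).subset ?_
  rintro _ ⟨x, hx, rfl⟩
  simpa using hx

theorem AddMonoidHom.continuous_of_eq_sum_mul_comp {E ι : Type*} [NormedAddCommGroup E]
    [MeasurableSpace E] [BorelSpace E] [LocallyCompactSpace E] (G : E →+ ℝ) {ψ : ℝ → ℝ}
    (hψ : (∀ x, ψ =O[𝓝 x] fun _ => (1 : ℝ)) ∨ Measurable ψ) (s : Finset ι)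
    {a b : ι → E → ℝ} (ha : ∀ i ∈ s, Continuous (a i)) (hb : ∀ i ∈ s, Continuous (b i))
    (hG : ∀ u, G u = ∑ i ∈ s, a i u * ψ (b i u)) : Continuous G := by
  have hG' : ⇑G = fun u => ∑ i ∈ s, a i u * ψ (b i u) := funext hG
  rcases hψ with hbdd | hmeas
  · refine G.continuous_of_isBigO_one ?_
    rw [hG']
    exact IsBigO.fun_sum fun i hi => isBigO_one_mul_comp hbdd (ha i hi) (hb i hi) 0
  · refine MeasureTheory.Measure.AddMonoidHom.continuous_of_measurable G ?_
    rw [hG']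
    exact Finset.measurable_fun_sum s fun i hi =>
      (ha i hi).measurable.mul (hmeas.comp (hb i hi).measurable)

noncomputable def sinhDefect (d : ℝ → ℝ) (y : ℝ) : ℝ := cosh y * d y - d (sinh y)

theorem sinhDefect_eq_cosh_mul (d : ℝ → ℝ) :
    sinhDefect d = fun y => cosh y * (d (log (sinh y + √(sinh y ^ 2 + 1))) -
      (1 / √(sinh y ^ 2 + 1)) * d (sinh y)) := by
  funext y
  have hsqrt : √(sinh y ^ 2 + 1) = cosh y := by
    rw [add_comm, ← cosh_sq', sqrt_sq (cosh_pos y).le]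
  have hlog : log (sinh y + √(sinh y ^ 2 + 1)) = y := by
    rw [add_comm (sinh y ^ 2), ← arsinh, arsinh_sinh]
  rw [sinhDefect, hlog, hsqrt]
  field_simp [(cosh_pos y).ne']

theorem sinhDefect_isBigO_one_or_measurable {d : ℝ → ℝ}
    (hreg : RegularOn (fun x => d (log (x + √(x ^ 2 + 1))) - (1 / √(x ^ 2 + 1)) * d x) univ) :
    (∀ x, sinhDefect d =O[𝓝 x] fun _ => (1 : ℝ)) ∨ Measurable (sinhDefect d) := by
  rw [sinhDefect_eq_cosh_mul]
  rcases hreg.isBigO_one_or_measurable with hbdd | hmeas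
  · exact .inl (isBigO_one_mul_comp hbdd continuous_cosh continuous_sinh)
  · exact .inr (continuous_cosh.measurable.mul (hmeas.comp continuous_sinh.measurable))

theorem map_sinh_mul_cosh (d : ℝ →+ ℝ) (t s : ℝ) :
    d (sinh t * cosh s) = cosh s * d (sinh t) + tanh s * d (sinh s) * sinh t +
      (cosh s * sinhDefect d t + tanh s * sinh t * sinhDefect d s -
        (sinhDefect d (t + s) + sinhDefect d (t - s)) / 2) := by
  have hsum : d (sinh t * cosh s) + d (sinh t * cosh s) =
      d (sinh (t + s)) + d (sinh (t - s)) := by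
    rw [← map_add, ← map_add, sinh_add, sinh_sub]
    ring_nf
  have hcosh : cosh s ≠ 0 := (cosh_pos s).ne'
  simp only [sinhDefect, cosh_add, cosh_sub, map_add, map_sub, tanh_eq_sinh_div_cosh]
  field_simp
  linear_combination cosh s * hsum

theorem map_mul_cosh (d : ℝ →+ ℝ)
    (hψ : (∀ x, sinhDefect d =O[𝓝 x] fun _ => (1 : ℝ)) ∨ Measurable (sinhDefect d))
    (s u : ℝ) : d (u * cosh s) = cosh s * d u + u * (d (cosh s) - cosh s * d 1) := by
  let G : ℝ →+ ℝ := AddMonoidHom.mk'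
    (fun u => d (u * cosh s) - cosh s * d u - tanh s * d (sinh s) * u)
    (fun x y => by simp only [add_mul, map_add]; ring)
  have hG : Continuous G := by
    refine G.continuous_of_eq_sum_mul_comp hψ Finset.univ
      (a := ![fun _ => cosh s, fun u => tanh s * u, fun _ => -1 / 2, fun _ => -1 / 2])
      (b := ![arsinh, fun _ => s, fun u => arsinh u + s, fun u => arsinh u - s])
      (fun i _ => by fin_cases i <;> continuity)
      (fun i _ => by fin_cases i <;> continuity) fun u => ?_
    have := map_sinh_mul_cosh d (arsinh u) s
    rw [sinh_arsinh] at this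
    simp only [G, AddMonoidHom.mk'_apply, Fin.sum_univ_four, Matrix.cons_val]
    linear_combination this
  have hlin := map_real_smul G hG u 1
  simp only [G, AddMonoidHom.mk'_apply, smul_eq_mul, mul_one, one_mul] at hlin
  linear_combination hlin

theorem AddMonoidHom.leibniz_of_leibniz_one_le (χ : ℝ →+ ℝ)
    (h : ∀ u w, 1 ≤ w → χ (u * w) = u * χ w + w * χ u) (u y : ℝ) :
    χ (u * y) = u * χ y + y * χ u := by
  have h1 : χ 1 = 0 := by simpa using h 1 1 le_rfl
  obtain ⟨n, hn⟩ := exists_nat_ge (1 - y)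
  have hshift := h u (y + n) (by linarith)
  have hnu : χ (n * u) = n * χ u := by simpa using map_nsmul χ n u
  have hn1 : χ n = n * χ 1 := by simpa using map_nsmul χ n 1
  rw [mul_add, map_add, map_add, mul_comm u (n : ℝ), hnu, hn1, h1] at hshift
  linear_combination hshift

theorem stmt_11 (d : ℝ → ℝ)
    (hd : ∀ x y : ℝ, d (x + y) = d x + d y)
    (hreg : RegularOn
      (fun x : ℝ => d (Real.log (x + Real.sqrt (x ^ 2 + 1))) -
        (1 / Real.sqrt (x ^ 2 + 1)) * d x)
      Set.univ) :
    ∃ χ : ℝ → ℝ, IsRealDerivation χ ∧ ∀ x : ℝ, d x = χ x + d 1 * x := by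
  let D : ℝ →+ ℝ := AddMonoidHom.mk' d hd
  let χ : ℝ →+ ℝ := AddMonoidHom.mk' (fun x => d x - d 1 * x)
    (fun x y => by rw [hd]; ring)
  have hχ : ∀ u w, 1 ≤ w → χ (u * w) = u * χ w + w * χ u := by
    intro u w hw
    have := map_mul_cosh D (sinhDefect_isBigO_one_or_measurable hreg) (arcosh w) u
    rw [cosh_arcosh hw] at this
    simp only [χ, D, AddMonoidHom.mk'_apply] at this ⊢
    linear_combination this
  exact ⟨χ, ⟨map_add χ, χ.leibniz_of_leibniz_one_le hχ⟩, fun x => by simp [χ]⟩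
end
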